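/- Let μ be a centred probability measure on ℝ with distribution function F, b < 0 < b̄, γ = 1 − F(b̄−) + F(b), and suppose λ ∈ (0,γ] satisfies m̃_{F(b)}^{F(b̄−)} + λb + (γ−λ)b̄ = 0, and π* satisfies m̃^{F(b)} + m̃_{F(b̄−)}^{π*} = b(F(b) + π* − F(b̄−)). Define ν = ((γ−λ−(1−π*))δ_b + μ_{π*})/(γ−λ). Then ν has barycentre b̄, i.e. (γ−λ)∫x dν = b̄(γ−λ). -/

import Mathlib

open MeasureTheory Set

/-- Distribution function of `μ`. -/
noncomputable def distF (μ : Measure ℝ) (x : ℝ) : ℝ := (μ (Iic x)).toReal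

/-- Left limit `F(x-)` of the distribution function. -/
noncomputable def distFm (μ : Measure ℝ) (x : ℝ) : ℝ := (μ (Iio x)).toReal

/-- Quantile function of `μ`. -/
noncomputable def quantile (μ : Measure ℝ) (u : ℝ) : ℝ :=
  sInf {x : ℝ | u ≤ distF μ x}

/-- The sub-probability measure `μ_p^q`, i.e. `μ` restricted to its quantile range `(p,q]`,
realised as the image under the quantile function of Lebesgue measure on `(p,q]`. -/
noncomputable def qmeas (μ : Measure ℝ) (p q : ℝ) : Measure ℝ :=
  (volume.restrict (Ioc p q)).map (quantile μ)

/-- `m̃_p^q = ∫ x dμ_p^q`. -/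
noncomputable def mtil (μ : Measure ℝ) (p q : ℝ) : ℝ :=
  ∫ u in Ioc p q, quantile μ u

/-- The barycentre `m_p^q` of `μ` restricted to the quantile range `(p,q]`. -/
noncomputable def bary (μ : Measure ℝ) (p q : ℝ) : ℝ :=
  if p < q then (q - p)⁻¹ * mtil μ p q else quantile μ q

/-! Under the quantile transform `μ = F⁻¹_* (Leb|(0,1])`, `m̃_p^q` is the integral of `F⁻¹` over
`(p, q]`; it is therefore additive in the interval, and `m̃_0^1 = ∫ x dμ = 0`. Subtracting the
equations defining `λ` and `π*` from
`m̃_0^{F(b)} + m̃_{F(b)}^{F(b̄-)} + m̃_{F(b̄-)}^{π*} + m̃_{π*}^1 = 0`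
gives `m̃_{π*}^1 + (γ - λ - (1 - π*)) b = (γ - λ) b̄`, which is the claim. The splitting needs
`π* ≥ F(b̄-)`, and this is forced by the equation of `π*` because `F⁻¹ ≤ b < 0` on `(0, F(b)]`. -/

open ProbabilityTheory
open scoped ENNReal

section Quantile

variable {μ : Measure ℝ}

lemma bddBelow_setOf_le_cdf {u : ℝ} (hu : 0 < u) : BddBelow {x | u ≤ cdf μ x} := by
  obtain ⟨x₀, hx₀⟩ : ∃ x₀, cdf μ x₀ < u :=
    ((tendsto_cdf_atBot μ).eventually (gt_mem_nhds hu)).exists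
  exact ⟨x₀, fun y hy => le_of_not_gt fun hyx => (hy.trans (monotone_cdf μ hyx.le)).not_gt hx₀⟩

lemma setOf_le_cdf_nonempty {u : ℝ} (hu : u < 1) : {x | u ≤ cdf μ x}.Nonempty :=
  let ⟨x₁, hx₁⟩ := ((tendsto_cdf_atTop μ).eventually (lt_mem_nhds hu)).exists
  ⟨x₁, hx₁.le⟩

lemma mtil_of_le {p q : ℝ} (h : q ≤ p) : mtil μ p q = 0 := by
  simp [mtil, Ioc_eq_empty_of_le h]

variable [IsProbabilityMeasure μ]

lemma distF_eq_cdf (x : ℝ) : distF μ x = cdf μ x := (cdf_eq_real μ x).symm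

lemma distF_le_distFm {x y : ℝ} (h : x < y) : distF μ x ≤ distFm μ y :=
  measureReal_mono (Iic_subset_Iio.2 h)

lemma distFm_le_one (x : ℝ) : distFm μ x ≤ 1 := measureReal_le_one

lemma quantile_eq_sInf_cdf (u : ℝ) : quantile μ u = sInf {x | u ≤ cdf μ x} := by
  simp only [quantile, distF_eq_cdf]

lemma le_cdf_quantile {u : ℝ} (hu₀ : 0 < u) (hu₁ : u < 1) : u ≤ cdf μ (quantile μ u) := by
  rw [quantile_eq_sInf_cdf]
  have hbdd := bddBelow_setOf_le_cdf (μ := μ) hu₀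
  have hne := setOf_le_cdf_nonempty (μ := μ) hu₁
  have habove : ∀ y ∈ Ioi (sInf {x | u ≤ cdf μ x}), u ≤ cdf μ y := fun y hy =>
    let ⟨s, hs, hsy⟩ := (csInf_lt_iff hbdd hne).1 hy
    hs.trans (monotone_cdf μ hsy.le)
  -- right continuity of the cdf at the infimum
  exact ge_of_tendsto (((cdf μ).right_continuous _).mono_left
    (nhdsWithin_mono _ Ioi_subset_Ici_self)) (eventually_nhdsWithin_of_forall habove)

lemma quantile_le_of_le_cdf {u x : ℝ} (hu : 0 < u) (h : u ≤ cdf μ x) : quantile μ u ≤ x := by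
  rw [quantile_eq_sInf_cdf]
  exact csInf_le (bddBelow_setOf_le_cdf hu) h

lemma quantile_le_iff {u x : ℝ} (hu₀ : 0 < u) (hu₁ : u < 1) :
    quantile μ u ≤ x ↔ u ≤ cdf μ x :=
  ⟨fun h => (le_cdf_quantile hu₀ hu₁).trans (monotone_cdf μ h), quantile_le_of_le_cdf hu₀⟩

lemma quantile_of_one_lt {u : ℝ} (hu : 1 < u) : quantile μ u = 0 := by
  have hempty : {x | u ≤ cdf μ x} = ∅ :=
    eq_empty_of_forall_notMem fun x hx => (hx.trans (cdf_le_one μ x)).not_gt hu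
  rw [quantile_eq_sInf_cdf, hempty, Real.sInf_empty]

lemma monotoneOn_quantile : MonotoneOn (quantile μ) (Ioo 0 1) := by
  intro u hu v hv huv
  simp only [quantile_eq_sInf_cdf]
  exact csInf_le_csInf (bddBelow_setOf_le_cdf hu.1) (setOf_le_cdf_nonempty hv.2)
    fun x hx => huv.trans hx

lemma restrict_Ioc_zero_one_eq_restrict_Ioo :
    volume.restrict (Ioc (0 : ℝ) 1) = volume.restrict (Ioo 0 1) :=
  (Measure.restrict_congr_set Ioo_ae_eq_Ioc).symm

lemma aemeasurable_quantile_restrict_Ioc :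
    AEMeasurable (quantile μ) (volume.restrict (Ioc 0 1)) := by
  rw [restrict_Ioc_zero_one_eq_restrict_Ioo]
  exact aemeasurable_restrict_of_monotoneOn measurableSet_Ioo monotoneOn_quantile

lemma map_quantile_restrict_Ioc : (volume.restrict (Ioc (0 : ℝ) 1)).map (quantile μ) = μ := by
  refine Measure.ext_of_Iic _ _ fun x => ?_
  have hpre : quantile μ ⁻¹' Iic x ∩ Ioo 0 1 = Iic (cdf μ x) ∩ Ioo 0 1 := by
    ext u
    simp only [mem_inter_iff, mem_preimage, mem_Iic, and_congr_left_iff]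
    exact fun hu => quantile_le_iff hu.1 hu.2
  rw [Measure.map_apply_of_aemeasurable aemeasurable_quantile_restrict_Ioc measurableSet_Iic,
    restrict_Ioc_zero_one_eq_restrict_Ioo, Measure.restrict_apply' measurableSet_Ioo, hpre,
    ← Measure.restrict_apply' measurableSet_Ioo, ← restrict_Ioc_zero_one_eq_restrict_Ioo,
    Measure.restrict_apply measurableSet_Iic, Iic_inter_Ioc_of_le (cdf_le_one μ x),
    Real.volume_Ioc, sub_zero, ofReal_cdf]

lemma integrableOn_quantile_Ioi_zero (hint : Integrable id μ) :
    IntegrableOn (quantile μ) (Ioi 0) := by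
  have hIoc : IntegrableOn (quantile μ) (Ioc 0 1) := by
    have h := integrable_map_measure aestronglyMeasurable_id
      (aemeasurable_quantile_restrict_Ioc (μ := μ))
    rw [map_quantile_restrict_Ioc] at h
    exact h.1 hint
  have hIoi : IntegrableOn (quantile μ) (Ioi 1) :=
    integrableOn_zero.congr_fun (fun _ hu => (quantile_of_one_lt hu).symm) measurableSet_Ioi
  rw [← Ioc_union_Ioi_eq_Ioi zero_le_one]
  exact hIoc.union hIoi

lemma integrableOn_quantile_Ioc (hint : Integrable id μ) {p q : ℝ} (hp : 0 ≤ p) :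
    IntegrableOn (quantile μ) (Ioc p q) :=
  (integrableOn_quantile_Ioi_zero hint).mono_set fun _ hu => hp.trans_lt hu.1

lemma mtil_zero_one (hcent : ∫ x, x ∂μ = 0) : mtil μ 0 1 = 0 := by
  have h := integral_map (f := fun x : ℝ => x) (aemeasurable_quantile_restrict_Ioc (μ := μ))
    (by rw [map_quantile_restrict_Ioc]; exact aestronglyMeasurable_id)
  rw [map_quantile_restrict_Ioc, hcent] at h
  exact h.symm

lemma mtil_of_one_le {p q : ℝ} (hp : 1 ≤ p) : mtil μ p q = 0 :=
  (setIntegral_congr_fun measurableSet_Ioc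
    fun _ hu => quantile_of_one_lt (hp.trans_lt hu.1)).trans (integral_zero _ _)

lemma mtil_add (hint : Integrable id μ) {p q r : ℝ} (hp : 0 ≤ p) (hpq : p ≤ q) (hqr : q ≤ r) :
    mtil μ p q + mtil μ q r = mtil μ p r := by
  rw [mtil, mtil, mtil, ← Ioc_union_Ioc_eq_Ioc hpq hqr,
    setIntegral_union (Ioc_disjoint_Ioc_of_le le_rfl) measurableSet_Ioc
      (integrableOn_quantile_Ioc hint hp) (integrableOn_quantile_Ioc hint (hp.trans hpq))]

lemma mtil_add_mtil_one (hint : Integrable id μ) {p q : ℝ} (hp : 0 ≤ p) (hpq : p ≤ q) :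
    mtil μ p q + mtil μ q 1 = mtil μ p 1 := by
  rcases le_or_gt q 1 with hq | hq
  · exact mtil_add hint hp hpq hq
  · rw [mtil_of_one_le hq.le, add_zero]
    rcases le_or_gt p 1 with hp₁ | hp₁
    · rw [← mtil_add hint hp hp₁ hq.le, mtil_of_one_le le_rfl, add_zero]
    · rw [mtil_of_one_le hp₁.le, mtil_of_le hp₁.le]

lemma mtil_le_mul_sub (hint : Integrable id μ) {p q x : ℝ} (hp : 0 ≤ p) (hpq : p ≤ q)
    (hq : q ≤ distF μ x) : mtil μ p q ≤ x * (q - p) := by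
  rw [distF_eq_cdf] at hq
  have h := setIntegral_mono_on (integrableOn_quantile_Ioc hint hp)
    (integrableOn_const (C := x) measure_Ioc_lt_top.ne) measurableSet_Ioc
    fun u hu => quantile_le_of_le_cdf (hp.trans_lt hu.1) (hu.2.trans hq)
  rwa [setIntegral_const, Real.volume_real_Ioc_of_le hpq, smul_eq_mul, mul_comm] at h

lemma integrable_id_qmeas (hint : Integrable id μ) {p q : ℝ} (hp : 0 ≤ p) :
    Integrable (fun x => x) (qmeas μ p q) :=
  (integrable_map_measure aestronglyMeasurable_id
    (integrableOn_quantile_Ioc hint hp).aemeasurable).2 (integrableOn_quantile_Ioc hint hp)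

lemma integral_id_qmeas (hint : Integrable id μ) {p q : ℝ} (hp : 0 ≤ p) :
    ∫ x, x ∂(qmeas μ p q) = mtil μ p q :=
  integral_map (integrableOn_quantile_Ioc hint hp).aemeasurable aestronglyMeasurable_id

lemma integral_smul_dirac_add_qmeas (hint : Integrable id μ) {p q : ℝ} (hp : 0 ≤ p)
    (c : ℝ≥0∞) {d : ℝ≥0∞} (hd : d ≠ ∞) (x : ℝ) :
    ∫ y, y ∂(c • (d • Measure.dirac x + qmeas μ p q)) = c.toReal * (d.toReal * x + mtil μ p q) := by
  have hint_d : Integrable (fun y => y) (d • Measure.dirac x) :=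
    (integrable_dirac (by simp)).smul_measure hd
  rw [integral_smul_measure, integral_add_measure hint_d (integrable_id_qmeas hint hp),
    integral_smul_measure, integral_dirac, integral_id_qmeas hint hp, smul_eq_mul, smul_eq_mul]

end Quantile

theorem stmt13_general (μ : Measure ℝ) [IsProbabilityMeasure μ]
    (hint : Integrable id μ) (hcent : ∫ x, x ∂μ = 0)
    (lb ub : ℝ) (hlb : lb < 0) (hub : 0 < ub)
    (l π : ℝ)
    (hlγ : l < 1 - distFm μ ub + distF μ lb)
    (heq1 : mtil μ (distF μ lb) (distFm μ ub) + l * lb +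
      ((1 - distFm μ ub + distF μ lb) - l) * ub = 0)
    (heq2 : mtil μ 0 (distF μ lb) + mtil μ (distFm μ ub) π =
      lb * (distF μ lb + π - distFm μ ub))
    (hmass : 0 ≤ (1 - distFm μ ub + distF μ lb) - l - (1 - π)) :
    (∫ x, x ∂((ENNReal.ofReal ((1 - distFm μ ub + distF μ lb) - l))⁻¹ •
      (ENNReal.ofReal ((1 - distFm μ ub + distF μ lb) - l - (1 - π)) •
          Measure.dirac lb + qmeas μ π 1))) = ub := by
  set F := distF μ lb
  set Fm := distFm μ ub
  have hF : 0 ≤ F := measureReal_nonneg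
  have hFFm : F ≤ Fm := distF_le_distFm (hlb.trans hub)
  have hFm : Fm ≤ 1 := distFm_le_one ub
  have hπ : Fm ≤ π := by
    by_contra! h
    have hle : mtil μ 0 F ≤ lb * (F - 0) := mtil_le_mul_sub hint le_rfl hF le_rfl
    rw [mtil_of_le h.le, add_zero] at heq2
    nlinarith [mul_pos_of_neg_of_neg hlb (sub_neg.2 h)]
  have htotal : mtil μ 0 F + mtil μ F Fm + mtil μ Fm π + mtil μ π 1 = 0 := by
    rw [mtil_add hint le_rfl hF hFFm, add_assoc, mtil_add_mtil_one hint (hF.trans hFFm) hπ,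
      mtil_add hint le_rfl (hF.trans hFFm) hFm, mtil_zero_one hcent]
  rw [integral_smul_dirac_add_qmeas hint (hF.trans (hFFm.trans hπ)) _ ENNReal.ofReal_ne_top,
    ENNReal.toReal_inv, ENNReal.toReal_ofReal (by linarith), ENNReal.toReal_ofReal hmass,
    inv_mul_eq_iff_eq_mul₀ (by linarith)]
  linear_combination htotal - heq1 - heq2

theorem stmt13 (μ : Measure ℝ) [IsProbabilityMeasure μ]
    (hint : Integrable id μ) (hcent : ∫ x, x ∂μ = 0)
    (lb ub : ℝ) (hlb : lb < 0) (hub : 0 < ub)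
    (l π : ℝ) (hl : l ∈ Ioc 0 (1 - distFm μ ub + distF μ lb))
    (hlγ : l < 1 - distFm μ ub + distF μ lb)
    (heq1 : mtil μ (distF μ lb) (distFm μ ub) + l * lb +
      ((1 - distFm μ ub + distF μ lb) - l) * ub = 0)
    (heq2 : mtil μ 0 (distF μ lb) + mtil μ (distFm μ ub) π =
      lb * (distF μ lb + π - distFm μ ub))
    (hmass : 0 ≤ (1 - distFm μ ub + distF μ lb) - l - (1 - π)) :
    (∫ x, x ∂((ENNReal.ofReal ((1 - distFm μ ub + distF μ lb) - l))⁻¹ •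
      (ENNReal.ofReal ((1 - distFm μ ub + distF μ lb) - l - (1 - π)) •
          Measure.dirac lb + qmeas μ π 1))) = ub :=
  stmt13_general μ hint hcent lb ub hlb hub l π hlγ heq1 heq2 hmass
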